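/- arXiv:2201.13132 — 2 statements merged into one kernel-verified Lean document; each statement's English description precedes it below -/
import Mathlib

section
/- Fix n ≥ 3 and t > 0. Define two parameter choices for a uniform two-component Bradley–Terry–Luce mixture: (A) a = (t, t, 1, …, 1), b = (1/t, 1/t, 1, …, 1); and (B) a' = (t, 1/t, 1, …, 1), b' = (1/t, t, 1, …, 1). Then for every pair of distinct indices i, j ∈ {1,…,n}, the mixture probabilities agree: (1/2)·a_i/(a_i + a_j) + (1/2)·b_i/(b_i + b_j) = (1/2)·a'_i/(a'_i + a'_j) + (1/2)·b'_i/(b'_i + b'_j). Hence the uniform mixture of two BTL models is not identifiable at these parameters when (A) and (B) are distinct (i.e. when t ≠ 1). -/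
/-- Non-identifiability example for the uniform two-component BTL mixture:
the parameter choices (A) `a = (t,t,1,…,1)`, `b = (1/t,1/t,1,…,1)` and
(B) `a' = (t,1/t,1,…,1)`, `b' = (1/t,t,1,…,1)` yield identical pairwise
mixture probabilities for all distinct `i, j`, and the two parameter choices
are distinct whenever `t ≠ 1`. -/
theorem btl_uniform_mixture_non_identifiable
    (n : ℕ) (hn : 3 ≤ n) (t : ℝ) (ht : 0 < t)
    (a b a' b' : Fin n → ℝ)
    (ha : a = fun (i : Fin n) => if (i : ℕ) < 2 then t else 1)
    (hb : b = fun (i : Fin n) => if (i : ℕ) < 2 then 1 / t else 1)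
    (ha' : a' = fun (i : Fin n) => if (i : ℕ) = 0 then t else if (i : ℕ) = 1 then 1 / t else 1)
    (hb' : b' = fun (i : Fin n) => if (i : ℕ) = 0 then 1 / t else if (i : ℕ) = 1 then t else 1) :
    (∀ i j : Fin n, i ≠ j →
      (1 / 2) * a i / (a i + a j) + (1 / 2) * b i / (b i + b j)
        = (1 / 2) * a' i / (a' i + a' j) + (1 / 2) * b' i / (b' i + b' j)) ∧
    (t ≠ 1 → (a, b) ≠ (a', b')) := by
  subst ha hb ha' hb'
  constructor
  · intro i j hij
    have hij' : (i : ℕ) ≠ (j : ℕ) := fun h => hij (Fin.ext h)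
    have ht0 : t ≠ 0 := ht.ne'
    simp only
    split_ifs <;> first
      | omega
      | (field_simp; ring)
      | field_simp
  · intro ht1 h
    have h1 : (1 : ℕ) < n := by omega
    have := congrFun (congrArg Prod.fst h) ⟨1, h1⟩
    simp only at this
    norm_num at this
    -- this should say t = 1/t
    have ht0 : t ≠ 0 := ht.ne'
    have : t * t = 1 := by field_simp at this; nlinarith [this]
    have : (t - 1) * (t + 1) = 0 := by nlinarith
    rcases mul_eq_zero.mp this with h2 | h2
    · exact ht1 (by linarith)
    · nlinarith
end

section
/- Fix n ≥ 3 and t > 0 with parameters a = (t, t, 1, …, 1) and b = (1/t, 1/t, 1, …, 1). Then for every pair of distinct indices i, j, the uniform BTL mixture probability satisfies (1/2)·a_i/(a_i + a_j) + (1/2)·b_i/(b_i + b_j) = 1/2. -/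
/-- For the parameters `a = (t,t,1,…,1)`, `b = (1/t,1/t,1,…,1)` with `t > 0`
and `n ≥ 3`, every pairwise probability of the uniform two-component BTL
mixture equals `1/2`. -/
theorem btl_uniform_mixture_all_probabilities_half
    (n : ℕ) (hn : 3 ≤ n) (t : ℝ) (ht : 0 < t)
    (a b : Fin n → ℝ)
    (ha : a = fun (i : Fin n) => if (i : ℕ) < 2 then t else 1)
    (hb : b = fun (i : Fin n) => if (i : ℕ) < 2 then 1 / t else 1) :
    ∀ i j : Fin n, i ≠ j →
      (1 / 2) * a i / (a i + a j) + (1 / 2) * b i / (b i + b j) = 1 / 2 := by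
  subst ha hb
  intro i j hij
  have ht' : t ≠ 0 := ne_of_gt ht
  have h1 : (0:ℝ) < 1 := one_pos
  by_cases hi : (i : ℕ) < 2 <;> by_cases hj : (j : ℕ) < 2 <;>
    simp only [hi, hj, if_true, if_false] <;> field_simp <;> ring
end
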